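/- For every H ∈ (0,1), ∫_0^∞ ((1+x)^{H−1/2} − x^{H−1/2})² dx = Γ(1−H)·Γ(H+1/2)/(√π · 4^H · H) − 1/(2H). Consequently, with c_H := √(2H)·2^H·B(1−H, H+1/2)^{−1/2}, one has ∫_0^∞ ((1+x)^{H−1/2} − x^{H−1/2})² dx + 1/(2H) = c_H^{−2}. -/

import Mathlib

open MeasureTheory

noncomputable section

/-- The Beta function `B(a,b) = Γ(a)Γ(b)/Γ(a+b)`. -/
def betaF (a b : ℝ) : ℝ := Real.Gamma a * Real.Gamma b / Real.Gamma (a + b)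

/-- The normalizing constant `c_H = √(2H)·2^H·B(1-H, H+1/2)^{-1/2}`. -/
def cH (H : ℝ) : ℝ := Real.sqrt (2 * H) * (2 : ℝ) ^ H * (betaF (1 - H) (H + 1 / 2)) ^ (-(1 / 2) : ℝ)

open Set Filter Topology Real

/-!
Write `f(x) = (1 + x)^κ - x^κ` with `κ = H - 1/2`. Integrating `(x f(x)²)'` over `(0, ∞)`
gives `2H ∫ f² = 2κ ∫ (1 + x)^(κ-1) f`, and the substitution `x = t / (1 - t)` turns the
right-hand integral into `∫₀¹ (1 - t)^(-2κ-1) (1 - t^κ) dt`. For `κ < 0` this is a difference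
of two Beta integrals; for `κ > 0` neither piece converges at `t = 1`, but one integration by
parts against `(1 - t)^(-2κ) (1 - t^κ)` leaves a single Beta integral. Legendre's duplication
formula `Γ(1/2 - κ) Γ(1 - κ) = 2^(2κ) √π Γ(1 - 2κ)` brings the result to the stated form.
-/

section BetaIntegral

lemma ofReal_rpow_mul_one_sub_rpow (a b : ℝ) {t : ℝ} (ht : t ∈ Icc (0 : ℝ) 1) :
    ((t ^ (a - 1) * (1 - t) ^ (b - 1) : ℝ) : ℂ) =
      (t : ℂ) ^ (a - 1 : ℂ) * (1 - t : ℂ) ^ (b - 1 : ℂ) := by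
  rw [Complex.ofReal_mul, Complex.ofReal_cpow ht.1, Complex.ofReal_cpow (sub_nonneg.2 ht.2)]
  push_cast
  rfl

variable {a b : ℝ}

lemma intervalIntegrable_rpow_mul_one_sub_rpow (ha : 0 < a) (hb : 0 < b) :
    IntervalIntegrable (fun t : ℝ ↦ t ^ (a - 1) * (1 - t) ^ (b - 1)) volume 0 1 := by
  have h := Complex.betaIntegral_convergent (u := a) (v := b) (by simpa) (by simpa)
  have hre : IntervalIntegrable
      (fun t : ℝ ↦ ((t : ℂ) ^ (a - 1 : ℂ) * (1 - t : ℂ) ^ (b - 1 : ℂ)).re) volume 0 1 :=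
    ⟨h.1.re, h.2.re⟩
  refine hre.congr fun t ht ↦ ?_
  rw [uIoc_of_le zero_le_one] at ht
  simp only [← ofReal_rpow_mul_one_sub_rpow a b (Ioc_subset_Icc_self ht), Complex.ofReal_re]

lemma integral_rpow_mul_one_sub_rpow (ha : 0 < a) (hb : 0 < b) :
    ∫ t in (0 : ℝ)..1, t ^ (a - 1) * (1 - t) ^ (b - 1) = betaF a b := by
  have h := Complex.betaIntegral_eq_Gamma_mul_div a b (by simpa) (by simpa)
  rw [Complex.betaIntegral, ← intervalIntegral.integral_congr (fun t ht ↦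
      ofReal_rpow_mul_one_sub_rpow a b (uIcc_of_le (zero_le_one' ℝ) ▸ ht)),
    intervalIntegral.integral_ofReal, ← Complex.ofReal_add, Complex.Gamma_ofReal,
    Complex.Gamma_ofReal, Complex.Gamma_ofReal] at h
  exact_mod_cast h

end BetaIntegral

section UnitInterval

variable {κ p : ℝ}

lemma one_sub_rpow_mul_one_sub_rpow_mem_Icc {t : ℝ} (ht : t ∈ Ico (0 : ℝ) 1)
    (hκ : κ ∈ Icc (0 : ℝ) 1) : (1 - t) ^ p * (1 - t ^ κ) ∈ Icc 0 ((1 - t) ^ (p + 1)) := by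
  have hs : 0 < 1 - t := sub_pos.2 ht.2
  refine ⟨mul_nonneg (rpow_nonneg hs.le _) (sub_nonneg.2 (rpow_le_one ht.1 ht.2.le hκ.1)), ?_⟩
  rw [rpow_add_one hs.ne']
  exact mul_le_mul_of_nonneg_left (by linarith [self_le_rpow_of_le_one ht.1 ht.2.le hκ.2])
    (rpow_nonneg hs.le _)

lemma intervalIntegrable_one_sub_rpow_mul_one_sub_rpow (hκ : κ ∈ Icc (0 : ℝ) 1) (hp : -2 < p) :
    IntervalIntegrable (fun t : ℝ ↦ (1 - t) ^ p * (1 - t ^ κ)) volume 0 1 := by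
  refine (intervalIntegrable_rpow_mul_one_sub_rpow one_pos (by linarith : 0 < p + 2)).mono_fun
    (by fun_prop) ?_
  rw [uIoc_of_le zero_le_one, ← restrict_Ioo_eq_restrict_Ioc]
  refine ae_restrict_of_forall_mem measurableSet_Ioo fun t ht ↦ ?_
  have hmem := one_sub_rpow_mul_one_sub_rpow_mem_Icc (p := p) (Ioo_subset_Ico_self ht) hκ
  have hdom : t ^ ((1 : ℝ) - 1) * (1 - t) ^ (p + 2 - 1) = (1 - t) ^ (p + 1) := by
    rw [sub_self, rpow_zero, one_mul]
    ring_nf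
  change ‖_‖ ≤ ‖_‖
  rw [hdom, Real.norm_of_nonneg hmem.1, Real.norm_of_nonneg (hmem.1.trans hmem.2)]
  exact hmem.2

lemma tendsto_one_sub_rpow_mul_one_sub_rpow_nhdsLT_one (hκ : κ ∈ Icc (0 : ℝ) 1) (hp : -1 < p) :
    Tendsto (fun t : ℝ ↦ (1 - t) ^ p * (1 - t ^ κ)) (𝓝[<] 1) (𝓝 0) := by
  have hdom : Tendsto (fun t : ℝ ↦ (1 - t) ^ (p + 1)) (𝓝[<] 1) (𝓝 0) := by
    have hcont : ContinuousAt (fun t : ℝ ↦ (1 - t) ^ (p + 1)) 1 :=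
      (continuousAt_const.sub continuousAt_id).rpow_const (Or.inr (by linarith))
    have := hcont.tendsto.mono_left (nhdsWithin_le_nhds (s := Iio 1))
    rwa [sub_self, zero_rpow (by linarith)] at this
  have hmem : ∀ᶠ t in 𝓝[<] (1 : ℝ), (1 - t) ^ p * (1 - t ^ κ) ∈ Icc 0 ((1 - t) ^ (p + 1)) := by
    filter_upwards [Ioo_mem_nhdsLT zero_lt_one] with t ht
    exact one_sub_rpow_mul_one_sub_rpow_mem_Icc (Ioo_subset_Ico_self ht) hκ
  exact tendsto_of_tendsto_of_tendsto_of_le_of_le' tendsto_const_nhds hdom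
    (hmem.mono fun _ h ↦ h.1) (hmem.mono fun _ h ↦ h.2)

lemma two_mul_integral_one_sub_rpow_mul_one_sub_rpow_of_neg (h1 : -1 < κ) (h0 : κ < 0) :
    2 * κ * ∫ t in (0 : ℝ)..1, (1 - t) ^ (-2 * κ - 1) * (1 - t ^ κ) =
      Gamma (κ + 1) * Gamma (1 - 2 * κ) / Gamma (1 - κ) - 1 := by
  have hb : 0 < -2 * κ := by linarith
  have hsplit : ∫ t in (0 : ℝ)..1, (1 - t) ^ (-2 * κ - 1) * (1 - t ^ κ) =
      (∫ t in (0 : ℝ)..1, t ^ ((1 : ℝ) - 1) * (1 - t) ^ (-2 * κ - 1)) -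
        ∫ t in (0 : ℝ)..1, t ^ (κ + 1 - 1) * (1 - t) ^ (-2 * κ - 1) := by
    rw [← intervalIntegral.integral_sub (intervalIntegrable_rpow_mul_one_sub_rpow one_pos hb)
      (intervalIntegrable_rpow_mul_one_sub_rpow (by linarith) hb)]
    congr 1 with t
    rw [sub_self, rpow_zero, add_sub_cancel_right]
    ring
  have hΓ : Gamma (1 - 2 * κ) = -2 * κ * Gamma (-2 * κ) := by
    rw [← Gamma_add_one hb.ne']
    ring_nf
  rw [hsplit, integral_rpow_mul_one_sub_rpow one_pos hb,
    integral_rpow_mul_one_sub_rpow (by linarith) hb, betaF, betaF, Gamma_one, add_comm 1,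
    Gamma_add_one hb.ne', hΓ, show κ + 1 + -2 * κ = 1 - κ by ring, one_mul,
    div_mul_cancel_right₀ (Gamma_pos_of_pos hb).ne']
  have : κ ≠ 0 := h0.ne
  have : Gamma (1 - κ) ≠ 0 := (Gamma_pos_of_pos (by linarith)).ne'
  field_simp
  ring

lemma two_mul_integral_one_sub_rpow_mul_one_sub_rpow_of_pos (h0 : 0 < κ) (h1 : κ < 1 / 2) :
    2 * κ * ∫ t in (0 : ℝ)..1, (1 - t) ^ (-2 * κ - 1) * (1 - t ^ κ) =
      Gamma (κ + 1) * Gamma (1 - 2 * κ) / Gamma (1 - κ) - 1 := by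
  have hκ : κ ∈ Icc (0 : ℝ) 1 := ⟨h0.le, by linarith⟩
  have hb : 0 < 1 - 2 * κ := by linarith
  have hbeta : ∀ t : ℝ, t ^ (κ - 1) * (1 - t) ^ (1 - 2 * κ - 1) =
      t ^ (κ - 1) * (1 - t) ^ (-2 * κ) := fun t ↦ by ring_nf
  have hint :=
    intervalIntegrable_one_sub_rpow_mul_one_sub_rpow (p := -2 * κ - 1) hκ (by linarith)
  have hint' := (intervalIntegrable_rpow_mul_one_sub_rpow h0 hb).congr fun t _ ↦ hbeta t
  have hderiv : ∀ t ∈ Ioo (0 : ℝ) 1, HasDerivAt (fun t : ℝ ↦ (1 - t) ^ (-2 * κ) * (1 - t ^ κ))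
      (2 * κ * ((1 - t) ^ (-2 * κ - 1) * (1 - t ^ κ)) -
        κ * (t ^ (κ - 1) * (1 - t) ^ (-2 * κ))) t := by
    intro t ht
    refine (((hasDerivAt_id' t).const_sub 1 |>.rpow_const (Or.inl (sub_pos.2 ht.2).ne')).mul
      ((hasDerivAt_rpow_const (Or.inl ht.1.ne')).const_sub 1)).congr_deriv ?_
    ring
  have hleft : Tendsto (fun t : ℝ ↦ (1 - t) ^ (-2 * κ) * (1 - t ^ κ)) (𝓝[>] 0) (𝓝 1) := by
    have : ContinuousAt (fun t : ℝ ↦ (1 - t) ^ (-2 * κ) * (1 - t ^ κ)) 0 :=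
      ((continuousAt_const.sub continuousAt_id).rpow_const (Or.inl (by norm_num))).mul
        (continuousAt_const.sub (continuousAt_rpow_const _ _ (Or.inr h0.le)))
    simpa [zero_rpow h0.ne'] using this.tendsto.mono_left nhdsWithin_le_nhds
  have hftc := intervalIntegral.integral_eq_sub_of_hasDerivAt_of_tendsto zero_lt_one hderiv
    ((hint.const_mul _).sub (hint'.const_mul _)) hleft
    (tendsto_one_sub_rpow_mul_one_sub_rpow_nhdsLT_one hκ (by linarith))
  rw [intervalIntegral.integral_sub (hint.const_mul _) (hint'.const_mul _),
    intervalIntegral.integral_const_mul, intervalIntegral.integral_const_mul,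
    ← intervalIntegral.integral_congr fun t _ ↦ hbeta t, integral_rpow_mul_one_sub_rpow h0 hb,
    betaF, show κ + (1 - 2 * κ) = 1 - κ by ring] at hftc
  rw [Gamma_add_one h0.ne']
  linear_combination hftc

lemma two_mul_integral_one_sub_rpow_mul_one_sub_rpow (h1 : -1 < κ) (h2 : κ < 1 / 2) :
    2 * κ * ∫ t in (0 : ℝ)..1, (1 - t) ^ (-2 * κ - 1) * (1 - t ^ κ) =
      Gamma (κ + 1) * Gamma (1 - 2 * κ) / Gamma (1 - κ) - 1 := by
  rcases lt_trichotomy κ 0 with hneg | rfl | hpos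
  · exact two_mul_integral_one_sub_rpow_mul_one_sub_rpow_of_neg h1 hneg
  · simp
  · exact two_mul_integral_one_sub_rpow_mul_one_sub_rpow_of_pos hpos h2

end UnitInterval

lemma integral_Ioi_eq_integral_Ioo_div_one_sub {E : Type*} [NormedAddCommGroup E]
    [NormedSpace ℝ E] (g : ℝ → E) :
    ∫ x in Ioi 0, g x = ∫ t in Ioo (0 : ℝ) 1, ((1 - t) ^ 2)⁻¹ • g (t / (1 - t)) := by
  have hderiv : ∀ t ∈ Ioo (0 : ℝ) 1,
      HasDerivWithinAt (fun t ↦ t / (1 - t)) ((1 - t) ^ 2)⁻¹ (Ioo 0 1) t := by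
    intro t ht
    have h1t : 1 - t ≠ 0 := by linarith [ht.2]
    refine (((hasDerivAt_id' t).div ((hasDerivAt_id' t).const_sub 1) h1t).congr_deriv
      ?_).hasDerivWithinAt
    field_simp
    ring
  have hinj : InjOn (fun t : ℝ ↦ t / (1 - t)) (Ioo 0 1) := by
    intro s hs t ht hst
    have h1s : 1 - s ≠ 0 := by linarith [hs.2]
    have h1t : 1 - t ≠ 0 := by linarith [ht.2]
    field_simp at hst
    linarith
  have himage : (fun t : ℝ ↦ t / (1 - t)) '' Ioo 0 1 = Ioi 0 := by
    refine Subset.antisymm (fun _ ⟨t, ht, hx⟩ ↦ hx ▸ div_pos ht.1 (by linarith [ht.2])) ?_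
    intro x (hx : 0 < x)
    refine ⟨x / (1 + x), ⟨by positivity, (div_lt_one (by positivity)).2 (by linarith)⟩, ?_⟩
    field_simp
    ring
  rw [← himage, integral_image_eq_integral_abs_deriv_smul measurableSet_Ioo hderiv hinj]
  refine setIntegral_congr_fun measurableSet_Ioo fun t ht ↦ ?_
  rw [abs_of_pos (inv_pos.2 (pow_pos (sub_pos.2 ht.2) 2))]

section HalfLine

variable {κ x : ℝ}

lemma abs_one_add_rpow_sub_rpow_le (hκ : κ ≤ 1) (hx : 0 < x) :
    |(1 + x) ^ κ - x ^ κ| ≤ |κ| * x ^ (κ - 1) := by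
  obtain ⟨c, hc, hslope⟩ := exists_hasDerivAt_eq_slope (fun y : ℝ ↦ y ^ κ)
    (fun y ↦ κ * y ^ (κ - 1)) (by linarith : x < 1 + x)
    (fun y hy ↦ continuousAt_rpow_const _ _ (Or.inl (by linarith [hy.1])) |>.continuousWithinAt)
    (fun y hy ↦ hasDerivAt_rpow_const (Or.inl (by linarith [hy.1])))
  rw [add_sub_cancel_right, div_one] at hslope
  rw [← hslope, abs_mul, abs_of_pos (rpow_pos_of_pos (hx.trans hc.1) _)]
  exact mul_le_mul_of_nonneg_left (rpow_le_rpow_of_nonpos hx hc.1.le (by linarith))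
    (abs_nonneg _)

lemma sq_one_add_rpow_sub_rpow_le_two_mul (hx : 0 ≤ x) :
    ((1 + x) ^ κ - x ^ κ) ^ 2 ≤ 2 * ((1 + x) ^ (κ * 2) + x ^ (κ * 2)) := by
  rw [rpow_mul (by linarith), rpow_mul hx, rpow_two, rpow_two]
  nlinarith [sq_nonneg ((1 + x) ^ κ + x ^ κ)]

lemma sq_one_add_rpow_sub_rpow_le_sq_mul_rpow (hκ : κ ≤ 1) (hx : 0 < x) :
    ((1 + x) ^ κ - x ^ κ) ^ 2 ≤ κ ^ 2 * x ^ ((κ - 1) * 2) := by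
  rw [rpow_mul hx.le, rpow_two, ← sq_abs, ← sq_abs κ, ← mul_pow]
  exact pow_le_pow_left₀ (abs_nonneg _) (abs_one_add_rpow_sub_rpow_le hκ hx) 2

lemma integrableOn_sq_one_add_rpow_sub_rpow (h1 : -1 / 2 < κ) (h2 : κ < 1 / 2) :
    IntegrableOn (fun x : ℝ ↦ ((1 + x) ^ κ - x ^ κ) ^ 2) (Ioi 0) := by
  have hmeas : AEStronglyMeasurable (fun x : ℝ ↦ ((1 + x) ^ κ - x ^ κ) ^ 2) := by fun_prop
  rw [← Ioc_union_Ioi_eq_Ioi zero_le_one]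
  refine IntegrableOn.union ?_ ?_
  · have hdom : IntegrableOn (fun x : ℝ ↦ 2 * ((1 + x) ^ (κ * 2) + x ^ (κ * 2))) (Ioc 0 1) := by
      rw [← intervalIntegrable_iff_integrableOn_Ioc_of_le zero_le_one]
      refine (ContinuousOn.intervalIntegrable ?_ |>.add
        (intervalIntegral.intervalIntegrable_rpow' (by linarith))).const_mul 2
      refine ContinuousOn.rpow_const (by fun_prop) fun y hy ↦ Or.inl ?_
      rw [uIcc_of_le zero_le_one] at hy
      linarith [hy.1]
    refine hdom.mono' hmeas.restrict (ae_restrict_of_forall_mem measurableSet_Ioc fun x hx ↦ ?_)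
    rw [Real.norm_of_nonneg (sq_nonneg _)]
    exact sq_one_add_rpow_sub_rpow_le_two_mul hx.1.le
  · have hdom : IntegrableOn (fun x : ℝ ↦ κ ^ 2 * x ^ ((κ - 1) * 2)) (Ioi 1) :=
      (integrableOn_Ioi_rpow_of_lt (by linarith) one_pos).const_mul _
    refine hdom.mono' hmeas.restrict (ae_restrict_of_forall_mem measurableSet_Ioi fun x hx ↦ ?_)
    rw [Real.norm_of_nonneg (sq_nonneg _)]
    exact sq_one_add_rpow_sub_rpow_le_sq_mul_rpow (by linarith) (zero_lt_one.trans hx)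

lemma integrableOn_one_add_rpow_mul_one_add_rpow_sub_rpow (h1 : -1 / 2 < κ) (h2 : κ < 1 / 2) :
    IntegrableOn (fun x : ℝ ↦ (1 + x) ^ (κ - 1) * ((1 + x) ^ κ - x ^ κ)) (Ioi 0) := by
  have hdom : IntegrableOn (fun x : ℝ ↦ (1 + x) ^ ((κ - 1) * 2)) (Ioi 0) := by
    refine ((integrable_one_add_norm (r := 2 - 2 * κ) (by simp; linarith)).integrableOn).congr_fun
      (fun x (hx : 0 < x) ↦ ?_) measurableSet_Ioi
    change (1 + ‖x‖) ^ _ = _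
    rw [Real.norm_of_nonneg hx.le]
    ring_nf
  refine (hdom.add (integrableOn_sq_one_add_rpow_sub_rpow h1 h2)).mono' (by fun_prop)
    (ae_restrict_of_forall_mem measurableSet_Ioi fun x (hx : 0 < x) ↦ ?_)
  change |(_ : ℝ)| ≤ (1 + x) ^ ((κ - 1) * 2) + ((1 + x) ^ κ - x ^ κ) ^ 2
  rw [abs_mul, rpow_mul (by linarith), rpow_two]
  nlinarith [sq_nonneg (|(1 + x) ^ (κ - 1)| - |(1 + x) ^ κ - x ^ κ|), sq_abs ((1 + x) ^ (κ - 1)),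
    sq_abs ((1 + x) ^ κ - x ^ κ)]

lemma hasDerivAt_mul_sq_one_add_rpow_sub_rpow (hx : 0 < x) :
    HasDerivAt (fun y : ℝ ↦ y * ((1 + y) ^ κ - y ^ κ) ^ 2)
      ((2 * κ + 1) * ((1 + x) ^ κ - x ^ κ) ^ 2 -
        2 * κ * ((1 + x) ^ (κ - 1) * ((1 + x) ^ κ - x ^ κ))) x := by
  have h1x : 1 + x ≠ 0 := by linarith
  refine ((hasDerivAt_id' x).mul (((((hasDerivAt_id' x).const_add 1).rpow_const
    (Or.inl h1x)).sub (hasDerivAt_rpow_const (Or.inl hx.ne'))).pow 2)).congr_deriv ?_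
  have e1 : x ^ (κ - 1) * x = x ^ κ := by rw [← rpow_add_one hx.ne', sub_add_cancel]
  have e2 : (1 + x) ^ (κ - 1) * (1 + x) = (1 + x) ^ κ := by
    rw [← rpow_add_one h1x, sub_add_cancel]
  simp only [Pi.pow_apply, Pi.sub_apply]
  linear_combination (2 * κ * ((1 + x) ^ κ - x ^ κ)) * (e2 - e1)

lemma tendsto_mul_sq_one_add_rpow_sub_rpow_nhdsGT_zero (hκ : -1 / 2 < κ) :
    Tendsto (fun x : ℝ ↦ x * ((1 + x) ^ κ - x ^ κ) ^ 2) (𝓝[>] 0) (𝓝 0) := by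
  have hdom :
      Tendsto (fun x : ℝ ↦ 2 * (x * (1 + x) ^ (κ * 2) + x ^ (κ * 2 + 1))) (𝓝[>] 0) (𝓝 0) := by
    have : ContinuousAt (fun x : ℝ ↦ 2 * (x * (1 + x) ^ (κ * 2) + x ^ (κ * 2 + 1))) 0 := by
      refine continuousAt_const.mul (continuousAt_id.mul ?_ |>.add ?_)
      · exact (continuousAt_const.add continuousAt_id).rpow_const (Or.inl (by norm_num))
      · exact continuousAt_rpow_const _ _ (Or.inr (by linarith))
    simpa [zero_rpow (show κ * 2 + 1 ≠ 0 by linarith)] using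
      this.tendsto.mono_left (nhdsWithin_le_nhds (s := Ioi 0))
  refine tendsto_of_tendsto_of_tendsto_of_le_of_le' tendsto_const_nhds hdom ?_ ?_ <;>
    filter_upwards [self_mem_nhdsWithin] with x (hx : 0 < x)
  · positivity
  · rw [rpow_add_one hx.ne']
    nlinarith [sq_one_add_rpow_sub_rpow_le_two_mul (κ := κ) hx.le]

lemma tendsto_mul_sq_one_add_rpow_sub_rpow_atTop (hκ : κ < 1 / 2) :
    Tendsto (fun x : ℝ ↦ x * ((1 + x) ^ κ - x ^ κ) ^ 2) atTop (𝓝 0) := by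
  have hdom : Tendsto (fun x : ℝ ↦ κ ^ 2 * x ^ (-(1 - 2 * κ))) atTop (𝓝 0) := by
    simpa using (tendsto_rpow_neg_atTop (by linarith : 0 < 1 - 2 * κ)).const_mul (κ ^ 2)
  refine tendsto_of_tendsto_of_tendsto_of_le_of_le' tendsto_const_nhds hdom ?_ ?_ <;>
    filter_upwards [eventually_gt_atTop 0] with x hx
  · positivity
  · calc x * ((1 + x) ^ κ - x ^ κ) ^ 2 ≤ x * (κ ^ 2 * x ^ ((κ - 1) * 2)) :=
          mul_le_mul_of_nonneg_left
            (sq_one_add_rpow_sub_rpow_le_sq_mul_rpow (by linarith) hx) hx.le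
      _ = κ ^ 2 * x ^ (-(1 - 2 * κ)) := by
          rw [mul_left_comm, ← rpow_one_add' hx.le (by linarith)]
          ring_nf

lemma two_mul_add_one_mul_integral_sq_one_add_rpow_sub_rpow (h1 : -1 / 2 < κ) (h2 : κ < 1 / 2) :
    (2 * κ + 1) * ∫ x in Ioi 0, ((1 + x) ^ κ - x ^ κ) ^ 2 =
      2 * κ * ∫ x in Ioi 0, (1 + x) ^ (κ - 1) * ((1 + x) ^ κ - x ^ κ) := by
  have hcont : ContinuousWithinAt (fun x : ℝ ↦ x * ((1 + x) ^ κ - x ^ κ) ^ 2) (Ici 0) 0 := by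
    rw [← continuousWithinAt_Ioi_iff_Ici, ContinuousWithinAt, zero_mul]
    exact tendsto_mul_sq_one_add_rpow_sub_rpow_nhdsGT_zero h1
  have hint_sq := integrableOn_sq_one_add_rpow_sub_rpow h1 h2
  have hint_cross := integrableOn_one_add_rpow_mul_one_add_rpow_sub_rpow h1 h2
  have hftc := integral_Ioi_of_hasDerivAt_of_tendsto hcont
    (fun x hx ↦ hasDerivAt_mul_sq_one_add_rpow_sub_rpow hx)
    ((hint_sq.const_mul _).sub (hint_cross.const_mul _))
    (tendsto_mul_sq_one_add_rpow_sub_rpow_atTop h2)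
  rw [integral_sub (hint_sq.const_mul _) (hint_cross.const_mul _), integral_const_mul,
    integral_const_mul, zero_mul, sub_zero, sub_eq_zero] at hftc
  exact hftc

lemma integral_one_add_rpow_mul_one_add_rpow_sub_rpow :
    ∫ x in Ioi 0, (1 + x) ^ (κ - 1) * ((1 + x) ^ κ - x ^ κ) =
      ∫ t in (0 : ℝ)..1, (1 - t) ^ (-2 * κ - 1) * (1 - t ^ κ) := by
  rw [integral_Ioi_eq_integral_Ioo_div_one_sub, intervalIntegral.integral_of_le zero_le_one,
    integral_Ioc_eq_integral_Ioo]
  refine setIntegral_congr_fun measurableSet_Ioo fun t ht ↦ ?_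
  have hs : 0 < 1 - t := sub_pos.2 ht.2
  have h1 : 1 + t / (1 - t) = (1 - t)⁻¹ := by field_simp; ring
  rw [smul_eq_mul, h1, inv_rpow hs.le, inv_rpow hs.le, div_rpow ht.1.le hs.le,
    rpow_sub_one hs.ne', show -2 * κ = -(2 * κ) by ring, rpow_sub_one hs.ne', rpow_neg hs.le,
    show 2 * κ = κ * 2 by ring, rpow_mul hs.le, rpow_two]
  have : (1 - t) ^ κ ≠ 0 := (rpow_pos_of_pos hs _).ne'
  field_simp

end HalfLine

lemma four_rpow_eq_two_rpow (x : ℝ) : (4 : ℝ) ^ x = 2 ^ (2 * x) := by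
  rw [rpow_mul zero_le_two]; norm_num

lemma Gamma_one_sub_two_mul_div_Gamma_one_sub {κ : ℝ} (hκ : κ < 1) :
    Gamma (1 - 2 * κ) / Gamma (1 - κ) = Gamma (1 / 2 - κ) / (4 ^ κ * √π) := by
  have h := Gamma_mul_Gamma_add_half (1 / 2 - κ)
  rw [show 1 / 2 - κ + 1 / 2 = 1 - κ by ring, show 2 * (1 / 2 - κ) = 1 - 2 * κ by ring,
    show 1 - (1 - 2 * κ) = 2 * κ by ring, ← four_rpow_eq_two_rpow] at h
  rw [div_eq_div_iff (Gamma_pos_of_pos (by linarith)).ne' (by positivity)]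
  linear_combination -h

lemma inv_cH_sq {H : ℝ} (h0 : 0 < H) (h1 : H < 1) :
    ((cH H) ^ 2)⁻¹ = Gamma (1 - H) * Gamma (H + 1 / 2) / (√π * 4 ^ H * H) := by
  have hB : 0 < betaF (1 - H) (H + 1 / 2) :=
    div_pos (mul_pos (Gamma_pos_of_pos (by linarith)) (Gamma_pos_of_pos (by linarith)))
      (Gamma_pos_of_pos (by linarith))
  have hΓ : Gamma (1 - H + (H + 1 / 2)) = √π / 2 := by
    rw [show 1 - H + (H + 1 / 2) = 1 / 2 + 1 by ring, Gamma_add_one (by norm_num),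
      Gamma_one_half_eq]
    ring
  rw [cH, mul_pow, mul_pow, sq_sqrt (by linarith), ← rpow_two, ← rpow_two, ← rpow_mul hB.le,
    ← rpow_mul zero_le_two, mul_comm H 2, ← four_rpow_eq_two_rpow,
    show -(1 / 2) * 2 = (-1 : ℝ) by norm_num, rpow_neg_one, betaF, hΓ]
  have : Gamma (1 - H) ≠ 0 := (Gamma_pos_of_pos (by linarith)).ne'
  have : Gamma (H + 1 / 2) ≠ 0 := (Gamma_pos_of_pos (by linarith)).ne'
  field_simp

/-- Evaluation of the integral `∫_0^∞ ((1+x)^{H-1/2} - x^{H-1/2})² dx`, used to identify the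
normalizing constant `c_H` of fractional Brownian motion: the integral equals
`Γ(1-H)Γ(H+1/2)/(√π·4^H·H) - 1/(2H)`, and consequently the integral plus `1/(2H)`
equals `c_H^{-2}`. -/
theorem fbm_constant_integral (H : ℝ) (hH : H ∈ Set.Ioo (0 : ℝ) 1) :
    (∫ x in Set.Ioi (0 : ℝ), ((1 + x) ^ (H - 1 / 2) - x ^ (H - 1 / 2)) ^ 2) =
      Real.Gamma (1 - H) * Real.Gamma (H + 1 / 2) / (Real.sqrt Real.pi * 4 ^ H * H) -
        1 / (2 * H) ∧
    (∫ x in Set.Ioi (0 : ℝ), ((1 + x) ^ (H - 1 / 2) - x ^ (H - 1 / 2)) ^ 2) + 1 / (2 * H) =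
      ((cH H) ^ 2)⁻¹ := by
  obtain ⟨h0, h1⟩ := hH
  have key := two_mul_add_one_mul_integral_sq_one_add_rpow_sub_rpow (κ := H - 1 / 2)
    (by linarith) (by linarith)
  rw [integral_one_add_rpow_mul_one_add_rpow_sub_rpow,
    two_mul_integral_one_sub_rpow_mul_one_sub_rpow (by linarith) (by linarith),
    mul_div_assoc (Gamma _), Gamma_one_sub_two_mul_div_Gamma_one_sub (by linarith),
    show H - 1 / 2 + 1 = H + 1 / 2 by ring, show 1 / 2 - (H - 1 / 2) = 1 - H by ring,
    show 2 * (H - 1 / 2) + 1 = 2 * H by ring, rpow_sub (by norm_num),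
    show (4 : ℝ) ^ (1 / 2 : ℝ) = 2 by rw [four_rpow_eq_two_rpow]; norm_num] at key
  generalize (∫ x in Ioi (0 : ℝ), ((1 + x) ^ (H - 1 / 2) - x ^ (H - 1 / 2)) ^ 2) = I at key ⊢
  have hI : I = Gamma (1 - H) * Gamma (H + 1 / 2) / (√π * 4 ^ H * H) - 1 / (2 * H) := by
    refine mul_left_cancel₀ (by positivity : 2 * H ≠ 0) (key.trans ?_)
    field_simp
  exact ⟨hI, by rw [hI, inv_cH_sq h0 h1]; ring⟩
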